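/- arXiv:1506.03798 — 3 statements merged into one kernel-verified Lean document; each statement's English description precedes it below -/
import Mathlib

section
/- If w is a permutation with d_i(w) = x ≠ w and σ(w)_{i-2} = -σ(x)_{i-2}, then σ(w)_{i-2} = -σ(w)_{i-1}. Symmetrically, if σ(w)_{i+1} = -σ(x)_{i+1}, then σ(w)_{i+1} = -σ(w)_i. -/
/-!  Permutations of `{1,…,n}` are modelled as `Equiv.Perm (Fin n)` with 0-based
values: the value `v : Fin n` stands for the paper's value `v+1`, and
`w.symm v` is the position of the value `v` in one-line notation.
`dmove n i` is the paper's elementary dual equivalence involution `d_{i+1}`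
(so `i` ranges over `1 ≤ i` and `i + 1 < n`, matching the paper's `1 < i+1 < n`),
and `dtmove n i` is the twisted move `d̃_{i+1}`. -/

/-- Haiman's elementary dual equivalence move: if the position of the middle
value `i` lies between the positions of `i-1` and `i+1`, do nothing; otherwise
interchange the value `i` with whichever of `i-1, i+1` is positioned further
from it. -/
def dmove (n : ℕ) (i : ℕ) (w : Equiv.Perm (Fin n)) : Equiv.Perm (Fin n) :=
  if h : 1 ≤ i ∧ i + 1 < n then
    let a : Fin n := ⟨i - 1, by omega⟩
    let b : Fin n := ⟨i, by omega⟩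
    let c : Fin n := ⟨i + 1, by omega⟩
    let pa := w.symm a
    let pb := w.symm b
    let pc := w.symm c
    if (pa < pb ∧ pb < pc) ∨ (pc < pb ∧ pb < pa) then w
    else if pb < pa ∧ pb < pc then
      (if pa < pc then Equiv.swap c b else Equiv.swap a b) * w
    else
      (if pa < pc then Equiv.swap a b else Equiv.swap c b) * w
  else w

/-- The twisted elementary dual equivalence move: if the position of the middle
value `i` lies between those of `i-1` and `i+1`, do nothing; otherwise
cyclically rotate the three values `i-1, i, i+1` so that `i` moves to the
other side of `i-1` and `i+1`, the outer two keeping their relative order. -/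
def dtmove (n : ℕ) (i : ℕ) (w : Equiv.Perm (Fin n)) : Equiv.Perm (Fin n) :=
  if h : 1 ≤ i ∧ i + 1 < n then
    let a : Fin n := ⟨i - 1, by omega⟩
    let b : Fin n := ⟨i, by omega⟩
    let c : Fin n := ⟨i + 1, by omega⟩
    let pa := w.symm a
    let pb := w.symm b
    let pc := w.symm c
    let u := if pa < pc then a else c   -- the outer value occurring first
    let v := if pa < pc then c else a   -- the outer value occurring last
    if (pa < pb ∧ pb < pc) ∨ (pc < pb ∧ pb < pa) then w
    else if pb < pa ∧ pb < pc then
      (Equiv.swap b u * Equiv.swap u v) * w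
    else
      (Equiv.swap u b * Equiv.swap b v) * w
  else w

/-- The inverse descent signature: `sig n w j = +1` if the (0-based) value `j`
occurs to the left of the value `j+1` in the one-line notation of `w`, and `-1`
otherwise.  (`sig n w (j-1)` is the paper's `σ(w)_j`.) -/
def sig (n : ℕ) (w : Equiv.Perm (Fin n)) (j : ℕ) : ℤ :=
  if h : j + 1 < n then
    if w.symm ⟨j, by omega⟩ < w.symm ⟨j + 1, h⟩ then 1 else -1
  else 1

/-! A move `d_i` that changes `w` exchanges the value `i` with one of its neighbours `i ± 1`.
If that neighbour is not one of the two values compared by `σ_{i-2}` (resp. `σ_{i+1}`), this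
entry of the signature is unchanged, contradicting the hypothesis. Otherwise, say `i - 1` and `i`
are exchanged: then `σ_{i-2}` flips exactly when the position of `i - 2` lies strictly between
those of `i - 1` and `i`, which forces `σ_{i-2} = -σ_{i-1}`. -/

open Equiv

theorem lt_iff_not_lt_of_lt_iff_not_lt {α : Type*} [LinearOrder α] {p q r : α}
    (h : r < p ↔ ¬r < q) : r < p ↔ ¬p < q := by
  grind

theorem ite_one_neg_one_eq_neg_iff (P Q : Prop) [Decidable P] [Decidable Q] :
    ((if P then 1 else -1 : ℤ) = -(if Q then 1 else -1)) ↔ (P ↔ ¬Q) := by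
  split_ifs <;> simp_all

section

variable {n : ℕ}

theorem symm_swap_mul_apply (u v z : Fin n) (w : Perm (Fin n)) :
    (swap u v * w).symm z = w.symm (swap u v z) := rfl

theorem dmove_eq_self_or_swap_mul {i : ℕ} (hi : i + 2 < n) (w : Perm (Fin n)) :
    dmove n (i + 1) w = w ∨ dmove n (i + 1) w = swap ⟨i, by omega⟩ ⟨i + 1, by omega⟩ * w ∨
      dmove n (i + 1) w = swap ⟨i + 2, hi⟩ ⟨i + 1, by omega⟩ * w := by
  rw [dmove, dif_pos (by omega)]
  simp only [Nat.add_sub_cancel, add_assoc, Nat.reduceAdd]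
  split_ifs <;> simp

theorem sig_of_lt {j : ℕ} (hj : j + 1 < n) (w : Perm (Fin n)) :
    sig n w j = if w.symm ⟨j, by omega⟩ < w.symm ⟨j + 1, hj⟩ then 1 else -1 :=
  dif_pos hj

theorem sig_ne_neg_self (j : ℕ) (w : Perm (Fin n)) : sig n w j ≠ -sig n w j := by
  unfold sig
  split_ifs <;> decide

theorem sig_swap_mul_of_ne (j k l : ℕ) (hk : k < n) (hl : l < n)
    (hkj : k ≠ j ∧ k ≠ j + 1) (hlj : l ≠ j ∧ l ≠ j + 1) (w : Perm (Fin n)) :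
    sig n (swap ⟨k, hk⟩ ⟨l, hl⟩ * w) j = sig n w j := by
  by_cases hj : j + 1 < n
  · rw [sig_of_lt hj, sig_of_lt hj, symm_swap_mul_apply, symm_swap_mul_apply,
      swap_apply_of_ne_of_ne (Fin.ne_of_val_ne hkj.1.symm) (Fin.ne_of_val_ne hlj.1.symm),
      swap_apply_of_ne_of_ne (Fin.ne_of_val_ne hkj.2.symm) (Fin.ne_of_val_ne hlj.2.symm)]
  · simp only [sig, dif_neg hj]

theorem sig_eq_neg_sig_succ_of_eq_neg_sig_swap {j : ℕ} (hj : j + 2 < n) (w : Perm (Fin n))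
    (h : sig n w j = -sig n (swap ⟨j + 1, by omega⟩ ⟨j + 2, hj⟩ * w) j) :
    sig n w j = -sig n w (j + 1) := by
  rw [sig_of_lt (by omega), sig_of_lt (by omega), ite_one_neg_one_eq_neg_iff] at h ⊢
  rw [symm_swap_mul_apply, symm_swap_mul_apply, swap_apply_left,
    swap_apply_of_ne_of_ne (by simp) (by simp)] at h
  exact lt_iff_not_lt_of_lt_iff_not_lt h

theorem sig_succ_eq_neg_sig_of_eq_neg_sig_swap {j : ℕ} (hj : j + 2 < n) (w : Perm (Fin n))
    (h : sig n w (j + 1) = -sig n (swap ⟨j + 1, by omega⟩ ⟨j, by omega⟩ * w) (j + 1)) :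
    sig n w (j + 1) = -sig n w j := by
  rw [sig_of_lt (by omega), sig_of_lt (by omega), ite_one_neg_one_eq_neg_iff] at h ⊢
  rw [symm_swap_mul_apply, symm_swap_mul_apply, swap_apply_left,
    swap_apply_of_ne_of_ne (by simp [Fin.ext_iff]) (by simp [Fin.ext_iff]; omega)] at h
  exact lt_iff_not_lt_of_lt_iff_not_lt (α := (Fin n)ᵒᵈ) h

end

/-- Values are 0-based: this `i` is the paper's `i - 1`, so `3 < i < n - 1` becomes `3 ≤ i` and
`i + 2 < n`. -/
theorem dmove_axiom3 (n i : ℕ) (hi : 3 ≤ i) (hin : i + 2 < n)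
    (w : Equiv.Perm (Fin n)) (hx : dmove n i w ≠ w) :
    (sig n w (i - 2) = -sig n (dmove n i w) (i - 2) →
      sig n w (i - 2) = -sig n w (i - 1)) ∧
    (sig n w (i + 1) = -sig n (dmove n i w) (i + 1) →
      sig n w (i + 1) = -sig n w i) := by
  obtain ⟨j, rfl⟩ : ∃ j, i = j + 2 := ⟨i - 2, by omega⟩
  rw [show j + 2 - 2 = j by omega, show j + 2 - 1 = j + 1 by omega]
  rcases dmove_eq_self_or_swap_mul (i := j + 1) (by omega) w with hfix | hmove | hmove
  · exact absurd hfix hx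
  · rw [hmove]
    refine ⟨sig_eq_neg_sig_succ_of_eq_neg_sig_swap (by omega) w, fun h => ?_⟩
    rw [sig_swap_mul_of_ne _ _ _ _ _ ⟨by omega, by omega⟩ ⟨by omega, by omega⟩] at h
    exact (sig_ne_neg_self _ w h).elim
  · rw [hmove]
    refine ⟨fun h => ?_, sig_succ_eq_neg_sig_of_eq_neg_sig_swap (j := j + 2) (by omega) w⟩
    rw [sig_swap_mul_of_ne _ _ _ _ _ ⟨by omega, by omega⟩ ⟨by omega, by omega⟩] at h
    exact (sig_ne_neg_self _ w h).elim
end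

section
/- Two standard Young tableaux of partition shapes are dual equivalent (connected by a sequence of elementary dual equivalence moves d_i) if and only if they have the same shape. -/
/-!  Standard Young tableaux are modelled as functions `T : ℕ × ℕ → ℕ`
(cells `(row, col)` in English notation) that vanish outside the diagram and
restrict to a bijection from the cells onto `{1,…,n}`, increasing along rows
and columns.  A descent of `T` is an `i` such that `i+1` lies in a strictly
lower row (larger row index) than `i`. -/

/-- `T` is a standard Young tableau of shape `μ`. -/
def IsStandardYT (μ : YoungDiagram) (T : ℕ × ℕ → ℕ) : Prop :=
  Set.BijOn T ↑μ.cells (Set.Icc 1 μ.cells.card) ∧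
  (∀ c : ℕ × ℕ, c ∉ μ.cells → T c = 0) ∧
  (∀ r c : ℕ, (r, c) ∈ μ.cells → (r, c + 1) ∈ μ.cells → T (r, c) < T (r, c + 1)) ∧
  (∀ r c : ℕ, (r, c) ∈ μ.cells → (r + 1, c) ∈ μ.cells → T (r, c) < T (r + 1, c))

open Classical in
/-- The descent set of a standard Young tableau: those `i ∈ [n-1]` such that
`i + 1` lies in a strictly lower row than `i`. -/
noncomputable def DesY (μ : YoungDiagram) (T : ℕ × ℕ → ℕ) : Finset ℕ :=
  (Finset.Icc 1 (μ.cells.card - 1)).filter fun i =>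
    ∃ c1 ∈ μ.cells, ∃ c2 ∈ μ.cells, T c1 = i ∧ T c2 = i + 1 ∧ c1.1 < c2.1

/-- The content of a cell. -/
def contentY (c : ℕ × ℕ) : ℤ := (c.2 : ℤ) - (c.1 : ℤ)

/-- The content reading order on cells: increasing content, and within a
diagonal, southwest to northeast (increasing column). -/
def rltY (x y : ℕ × ℕ) : Prop :=
  contentY x < contentY y ∨ (contentY x = contentY y ∧ x.2 < y.2)

instance (x y : ℕ × ℕ) : Decidable (rltY x y) :=
  inferInstanceAs (Decidable (_ ∨ _ ∧ _))

/-- The cell of a standard tableau containing the value `v` (via choice). -/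
noncomputable def cellOfY (T : ℕ × ℕ → ℕ) (v : ℕ) : ℕ × ℕ :=
  Classical.epsilon fun c => T c = v

/-- Haiman's elementary dual equivalence move `d_i` on standard Young tableaux,
acting through the content reading word: if `i` lies between `i-1` and `i+1`
in the reading word, do nothing; otherwise interchange `i` with whichever of
`i-1, i+1` lies further away in the reading word. -/
noncomputable def dY (T : ℕ × ℕ → ℕ) (i : ℕ) : ℕ × ℕ → ℕ :=
  let a := i - 1
  let b := i
  let c := i + 1
  let xa := cellOfY T a
  let xb := cellOfY T b
  let xc := cellOfY T c
  if (rltY xa xb ∧ rltY xb xc) ∨ (rltY xc xb ∧ rltY xb xa) then T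
  else
    let p := if rltY xb xa ∧ rltY xb xc then (if rltY xa xc then c else a)
             else (if rltY xa xc then a else c)
    fun x => if T x = b then p else if T x = p then b else T x

/-!
Each move `d_i` permutes only the values `i - 1, i, i + 1`, so it keeps the empty cells (value `0`)
and hence the shape. Conversely, induct on `n = |λ|`; the entry `n` of a standard tableau sits in a
corner. If `T` and `U` have `n` in the same corner, erase it: the moves `d_i` with `i < n - 1`
commute with erasing `n`. If `n` sits in different corners `c` (the higher one) and `c'`, take a
corner `g` of `λ ∖ {c, c'}` whose content lies strictly between theirs and a tableau `V` with
`n, n - 1, n - 2` in `c, c', g`. Then `n - 2` lies between `n - 1` and `n` in the reading word, so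
`d_{n-1}` exchanges `n - 1` and `n`, moving `n` from `c` to `c'`.
-/

open Function

def dPerm (i : ℕ) (xa xb xc : ℕ × ℕ) : Equiv.Perm ℕ :=
  if (rltY xa xb ∧ rltY xb xc) ∨ (rltY xc xb ∧ rltY xb xa) then 1
  else Equiv.swap i
    (if rltY xb xa ∧ rltY xb xc then (if rltY xa xc then i + 1 else i - 1)
     else (if rltY xa xc then i - 1 else i + 1))

theorem dY_eq_dPerm_comp (T : ℕ × ℕ → ℕ) (i : ℕ) :
    dY T i = dPerm i (cellOfY T (i - 1)) (cellOfY T i) (cellOfY T (i + 1)) ∘ T := by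
  simp only [dY, dPerm]
  split_ifs <;> funext x <;> simp [Equiv.swap_apply_def]

theorem dPerm_apply_of_ne {i v : ℕ} (xa xb xc : ℕ × ℕ) (hv : v + 1 < i ∨ i + 1 < v) :
    dPerm i xa xb xc v = v := by
  unfold dPerm
  split_ifs <;> first | rfl | exact Equiv.swap_apply_of_ne_of_ne (by omega) (by omega)

theorem dPerm_of_between {i : ℕ} {xa xb xc : ℕ × ℕ}
    (h : rltY xb xa ∧ rltY xa xc ∨ rltY xc xa ∧ rltY xa xb) :
    dPerm i xa xb xc = Equiv.swap i (i + 1) := by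
  have hmid : ¬((rltY xa xb ∧ rltY xb xc) ∨ (rltY xc xb ∧ rltY xb xa)) := by
    unfold rltY contentY at *
    omega
  rw [dPerm, if_neg hmid]
  congr 1
  split_ifs <;> unfold rltY contentY at * <;> omega

theorem dY_apply_eq_iff {T : ℕ × ℕ → ℕ} {i v : ℕ} {x : ℕ × ℕ} (hv : v + 1 < i ∨ i + 1 < v) :
    dY T i x = v ↔ T x = v := by
  have hfix := dPerm_apply_of_ne (cellOfY T (i - 1)) (cellOfY T i) (cellOfY T (i + 1)) hv
  rw [dY_eq_dPerm_comp, comp_apply]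
  exact ⟨fun h => Equiv.injective _ (h.trans hfix.symm), fun h => h ▸ hfix⟩

theorem foldl_dY_apply_eq_iff {l : List ℕ} {T : ℕ × ℕ → ℕ} {v : ℕ} {x : ℕ × ℕ}
    (hl : ∀ i ∈ l, v + 1 < i ∨ i + 1 < v) : l.foldl dY T x = v ↔ T x = v := by
  induction l generalizing T with
  | nil => rfl
  | cons i l ih =>
    rw [List.foldl_cons, ih fun j hj => hl j (List.mem_cons_of_mem _ hj),
      dY_apply_eq_iff (hl i List.mem_cons_self)]

theorem dY_eq_swap_comp_of_between {T : ℕ × ℕ → ℕ} {i : ℕ}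
    (h : rltY (cellOfY T i) (cellOfY T (i - 1)) ∧ rltY (cellOfY T (i - 1)) (cellOfY T (i + 1)) ∨
      rltY (cellOfY T (i + 1)) (cellOfY T (i - 1)) ∧ rltY (cellOfY T (i - 1)) (cellOfY T i)) :
    dY T i = Equiv.swap i (i + 1) ∘ T := by
  rw [dY_eq_dPerm_comp, dPerm_of_between h]

theorem cellOfY_update_zero {T : ℕ × ℕ → ℕ} {c : ℕ × ℕ} {v : ℕ} (hv : v ≠ 0) (hvc : v ≠ T c) :
    cellOfY (update T c 0) v = cellOfY T v := by
  unfold cellOfY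
  congr 1
  funext y
  by_cases hy : y = c
  · subst hy
    simp only [update_self, eq_iff_iff]
    exact ⟨fun h => absurd h.symm hv, fun h => absurd h.symm hvc⟩
  · rw [update_of_ne hy]

theorem dY_update_zero {T : ℕ × ℕ → ℕ} {c : ℕ × ℕ} {i : ℕ} (hi : 1 < i) (hiT : i + 1 < T c) :
    dY (update T c 0) i = update (dY T i) c 0 := by
  rw [dY_eq_dPerm_comp, dY_eq_dPerm_comp, cellOfY_update_zero, cellOfY_update_zero,
    cellOfY_update_zero, comp_update, dPerm_apply_of_ne _ _ _ (by omega)] <;> omega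

theorem foldl_dY_update_zero {l : List ℕ} {T : ℕ × ℕ → ℕ} {c : ℕ × ℕ}
    (hl : ∀ i ∈ l, 1 < i ∧ i + 1 < T c) :
    l.foldl dY (update T c 0) = update (l.foldl dY T) c 0 := by
  induction l generalizing T with
  | nil => rfl
  | cons i l ih =>
    obtain ⟨hi, hiT⟩ := hl i List.mem_cons_self
    have hc : dY T i c = T c := (dY_apply_eq_iff (Or.inr hiT)).2 rfl
    rw [List.foldl_cons, List.foldl_cons, dY_update_zero hi hiT, ih]
    exact fun j hj => hc ▸ hl j (List.mem_cons_of_mem _ hj)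

def DualEquivalent (n : ℕ) (T U : ℕ × ℕ → ℕ) : Prop :=
  ∃ l : List ℕ, (∀ i ∈ l, 1 < i ∧ i < n) ∧ l.foldl dY T = U

namespace DualEquivalent

variable {n : ℕ} {T U V : ℕ × ℕ → ℕ}

theorem refl (T : ℕ × ℕ → ℕ) : DualEquivalent n T T := ⟨[], by simp, rfl⟩

theorem trans (h₁ : DualEquivalent n T U) (h₂ : DualEquivalent n U V) : DualEquivalent n T V := by
  obtain ⟨l₁, hl₁, rfl⟩ := h₁
  obtain ⟨l₂, hl₂, rfl⟩ := h₂
  refine ⟨l₁ ++ l₂, fun i hi => ?_, List.foldl_append⟩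
  rcases List.mem_append.1 hi with hi | hi
  exacts [hl₁ i hi, hl₂ i hi]

theorem single {i : ℕ} (h₁ : 1 < i) (h₂ : i < n) : DualEquivalent n T (dY T i) :=
  ⟨[i], by simp [h₁, h₂], rfl⟩

theorem of_update_zero {c : ℕ × ℕ} (hTc : T c = n) (hUc : U c = n)
    (h : DualEquivalent (n - 1) (update T c 0) (update U c 0)) : DualEquivalent n T U := by
  obtain ⟨l, hl, hlTU⟩ := h
  have hl' : ∀ i ∈ l, 1 < i ∧ i + 1 < T c := fun i hi => by have := hl i hi; omega
  refine ⟨l, fun i hi => by have := hl' i hi; omega, ?_⟩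
  have hc : l.foldl dY T c = U c :=
    hUc ▸ hTc ▸ (foldl_dY_apply_eq_iff fun i hi => Or.inr (hl' i hi).2).2 rfl
  rw [foldl_dY_update_zero hl'] at hlTU
  calc l.foldl dY T = update (update (l.foldl dY T) c 0) c (U c) := by
        rw [update_idem, ← hc, update_eq_self]
    _ = U := by rw [hlTU, update_idem, update_eq_self]

end DualEquivalent

namespace YoungDiagram

def IsCorner (L : YoungDiagram) (c : ℕ × ℕ) : Prop :=
  c ∈ L ∧ (c.1 + 1, c.2) ∉ L ∧ (c.1, c.2 + 1) ∉ L

variable {L : YoungDiagram} {c c' x : ℕ × ℕ}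

theorem IsCorner.eq_of_le (hc : L.IsCorner c) (hx : x ∈ L) (hcx : c ≤ x) : x = c := by
  obtain ⟨h₁, h₂⟩ := Prod.le_def.1 hcx
  by_contra hne
  rcases Nat.lt_or_ge c.1 x.1 with h | h
  · exact hc.2.1 (L.up_left_mem h h₂ hx)
  · have : c.2 < x.2 := by
      by_contra!
      exact hne (Prod.ext (by omega) (by omega))
    exact hc.2.2 (L.up_left_mem h₁ this hx)

theorem IsCorner.snd_lt_of_fst_lt (hc : L.IsCorner c) (hx : x ∈ L) (h : c.1 < x.1) :
    x.2 < c.2 := by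
  by_contra! h'
  exact hc.2.1 (L.up_left_mem h h' hx)

theorem IsCorner.fst_ne (hc : L.IsCorner c) (hc' : L.IsCorner c') (hne : c ≠ c') :
    c.1 ≠ c'.1 := by
  intro h
  rcases le_total c.2 c'.2 with h' | h'
  · exact hne (hc.eq_of_le hc'.1 (Prod.le_def.2 ⟨h.le, h'⟩)).symm
  · exact hne (hc'.eq_of_le hc.1 (Prod.le_def.2 ⟨h.ge, h'⟩))

theorem exists_isCorner (h : L.cells.Nonempty) : ∃ c, L.IsCorner c := by
  obtain ⟨c, hc, hmax⟩ := L.cells.exists_max_image (fun x => x.1 + x.2) h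
  refine ⟨c, hc, fun h' => ?_, fun h' => ?_⟩
  · have := hmax _ h'
    omega
  · have := hmax _ h'
    omega

def eraseCorner (L : YoungDiagram) (c : ℕ × ℕ) (hc : L.IsCorner c) : YoungDiagram where
  cells := L.cells.erase c
  isLowerSet x y hyx hx := by
    simp only [Finset.coe_erase, Set.mem_sdiff, Finset.mem_coe, Set.mem_singleton_iff] at hx ⊢
    exact ⟨L.isLowerSet hyx hx.1, fun hy => hx.2 (hc.eq_of_le hx.1 (hy ▸ hyx))⟩

variable {hc : L.IsCorner c}

theorem mem_eraseCorner : x ∈ L.eraseCorner c hc ↔ x ≠ c ∧ x ∈ L :=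
  Finset.mem_erase

theorem card_eraseCorner : (L.eraseCorner c hc).cells.card = L.cells.card - 1 :=
  Finset.card_erase_of_mem hc.1

theorem coe_cells_eq_insert_eraseCorner :
    (L.cells : Set (ℕ × ℕ)) = insert c ↑(L.eraseCorner c hc).cells := by
  rw [eraseCorner, Finset.coe_erase, Set.insert_sdiff_singleton]
  exact (Set.insert_eq_of_mem (Finset.mem_coe.2 hc.1)).symm

theorem IsCorner.eraseCorner (hx : L.IsCorner x) (hne : x ≠ c) :
    (L.eraseCorner c hc).IsCorner x :=
  ⟨mem_eraseCorner.2 ⟨hne, hx.1⟩, fun h => hx.2.1 (mem_eraseCorner.1 h).2,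
    fun h => hx.2.2 (mem_eraseCorner.1 h).2⟩

end YoungDiagram

open YoungDiagram

theorem bijOn_iff_update_zero {L : YoungDiagram} {T : ℕ × ℕ → ℕ} {c : ℕ × ℕ}
    (hc : L.IsCorner c) (hTc : T c = L.cells.card) :
    Set.BijOn T L.cells (Set.Icc 1 L.cells.card) ↔
      Set.BijOn (update T c 0) (L.eraseCorner c hc).cells
        (Set.Icc 1 (L.eraseCorner c hc).cells.card) := by
  have hpos : 0 < L.cells.card := Finset.card_pos.2 ⟨c, hc.1⟩
  have hIcc :
      Set.Icc 1 L.cells.card = insert (T c) (Set.Icc 1 (L.eraseCorner c hc).cells.card) := by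
    ext v
    simp only [Set.mem_Icc, Set.mem_insert_iff, card_eraseCorner, hTc]
    omega
  have hEqOn : Set.EqOn T (update T c 0) (L.eraseCorner c hc).cells :=
    fun x hx => (update_of_ne (mem_eraseCorner.1 hx).1 _ _).symm
  rw [coe_cells_eq_insert_eraseCorner (hc := hc), hIcc, Set.BijOn.insert_iff, hEqOn.bijOn_iff]
  · exact fun h => (mem_eraseCorner.1 h).1 rfl
  · simp only [Set.mem_Icc, card_eraseCorner, hTc]
    omega

namespace IsStandardYT

variable {L : YoungDiagram} {T W : ℕ × ℕ → ℕ} {c x y : ℕ × ℕ}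

theorem apply_mem_Icc (hT : IsStandardYT L T) (hx : x ∈ L) : T x ∈ Set.Icc 1 L.cells.card :=
  hT.1.1 hx

theorem apply_eq_zero_iff (hT : IsStandardYT L T) : T x = 0 ↔ x ∉ L.cells :=
  ⟨fun h hx => by have := (hT.apply_mem_Icc hx).1; omega, hT.2.1 x⟩

theorem mem_of_apply_ne_zero (hT : IsStandardYT L T) (hx : T x ≠ 0) : x ∈ L :=
  not_not.1 (mt hT.apply_eq_zero_iff.2 hx)

theorem eq_of_apply_eq (hT : IsStandardYT L T) (hxy : T x = T y) (hx : T x ≠ 0) : x = y :=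
  hT.1.2.1 (hT.mem_of_apply_ne_zero hx) (hT.mem_of_apply_ne_zero (hxy ▸ hx)) hxy

theorem cellOfY_eq (hT : IsStandardYT L T) {v : ℕ} (hx : T x = v) (hv : v ≠ 0) :
    cellOfY T v = x := by
  have hspec : T (cellOfY T v) = v := Classical.epsilon_spec (p := fun c => T c = v) ⟨x, hx⟩
  exact hT.eq_of_apply_eq (hspec.trans hx.symm) (hspec.symm ▸ hv)

theorem isCorner (hT : IsStandardYT L T) (hx : x ∈ L) (hTx : T x = L.cells.card) :
    L.IsCorner x := by
  obtain ⟨r, k⟩ := x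
  refine ⟨hx, fun (h : (r + 1, k) ∈ L) => ?_, fun (h : (r, k + 1) ∈ L) => ?_⟩
  · have := hT.2.2.2 r k hx h
    have := (hT.apply_mem_Icc h).2
    omega
  · have := hT.2.2.1 r k hx h
    have := (hT.apply_mem_Icc h).2
    omega

theorem update_zero (hT : IsStandardYT L T) (hc : L.IsCorner c) (hTc : T c = L.cells.card) :
    IsStandardYT (L.eraseCorner c hc) (update T c 0) := by
  refine ⟨(bijOn_iff_update_zero hc hTc).1 hT.1, fun x hx => ?_, fun r k h₁ h₂ => ?_,
    fun r k h₁ h₂ => ?_⟩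
  · by_cases hxc : x = c
    · rw [hxc, update_self]
    · rw [update_of_ne hxc]
      exact hT.2.1 x fun h => hx (mem_eraseCorner.2 ⟨hxc, h⟩)
  · obtain ⟨hne₁, h₁⟩ := mem_eraseCorner.1 h₁
    obtain ⟨hne₂, h₂⟩ := mem_eraseCorner.1 h₂
    rw [update_of_ne hne₁, update_of_ne hne₂]
    exact hT.2.2.1 r k h₁ h₂
  · obtain ⟨hne₁, h₁⟩ := mem_eraseCorner.1 h₁
    obtain ⟨hne₂, h₂⟩ := mem_eraseCorner.1 h₂
    rw [update_of_ne hne₁, update_of_ne hne₂]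
    exact hT.2.2.2 r k h₁ h₂

theorem update_card {hc : L.IsCorner c} (hW : IsStandardYT (L.eraseCorner c hc) W) :
    IsStandardYT L (update W c L.cells.card) := by
  have hWc : W c = 0 := hW.2.1 c fun h => (mem_eraseCorner.1 h).1 rfl
  have hlt : ∀ x ∈ L.eraseCorner c hc, W x < L.cells.card := fun x hx => by
    have := (hW.apply_mem_Icc hx).2
    rw [card_eraseCorner] at this
    have := Finset.card_pos.2 ⟨c, hc.1⟩
    omega
  refine ⟨(bijOn_iff_update_zero hc (update_self c _ W)).2 ?_, fun x hx => ?_,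
    fun r k h₁ h₂ => ?_, fun r k h₁ h₂ => ?_⟩
  · rw [update_idem, update_eq_self_iff.2 hWc.symm]
    exact hW.1
  · rw [update_of_ne (by rintro rfl; exact hx hc.1)]
    exact hW.2.1 x fun h => hx (mem_eraseCorner.1 h).2
  · have hne : (r, k) ≠ c := by rintro rfl; exact hc.2.2 h₂
    rw [update_of_ne hne]
    by_cases h : (r, k + 1) = c
    · rw [h, update_self]
      exact hlt _ (mem_eraseCorner.2 ⟨hne, h₁⟩)
    · rw [update_of_ne h]
      exact hW.2.2.1 r k (mem_eraseCorner.2 ⟨hne, h₁⟩) (mem_eraseCorner.2 ⟨h, h₂⟩)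
  · have hne : (r, k) ≠ c := by rintro rfl; exact hc.2.1 h₂
    rw [update_of_ne hne]
    by_cases h : (r + 1, k) = c
    · rw [h, update_self]
      exact hlt _ (mem_eraseCorner.2 ⟨hne, h₁⟩)
    · rw [update_of_ne h]
      exact hW.2.2.2 r k (mem_eraseCorner.2 ⟨hne, h₁⟩) (mem_eraseCorner.2 ⟨h, h₂⟩)

theorem swap_apply_lt_swap_apply {i u v : ℕ} (huv : u < v) (h : ¬(u = i ∧ v = i + 1)) :
    Equiv.swap i (i + 1) u < Equiv.swap i (i + 1) v := by
  simp only [Equiv.swap_apply_def]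
  split_ifs <;> omega

theorem swap_comp (hT : IsStandardYT L T) {i : ℕ} (hi : i ≠ 0) (hx : T x = i) (hy : T y = i + 1)
    (h₁ : x.1 ≠ y.1) (h₂ : x.2 ≠ y.2) : IsStandardYT L (Equiv.swap i (i + 1) ∘ T) := by
  have hmono : ∀ a b, T a < T b → a.1 = b.1 ∨ a.2 = b.2 →
      Equiv.swap i (i + 1) (T a) < Equiv.swap i (i + 1) (T b) := by
    refine fun a b hab hline => swap_apply_lt_swap_apply hab ?_
    rintro ⟨ha, hb⟩
    obtain rfl := hT.eq_of_apply_eq (ha.trans hx.symm) (by omega)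
    obtain rfl := hT.eq_of_apply_eq (hb.trans hy.symm) (by omega)
    omega
  refine ⟨(Equiv.bijOn_swap ?_ ?_).comp hT.1, fun z hz => ?_,
    fun r k h h' => hmono _ _ (hT.2.2.1 r k h h') (Or.inl rfl),
    fun r k h h' => hmono _ _ (hT.2.2.2 r k h h') (Or.inr rfl)⟩
  · exact hx ▸ hT.apply_mem_Icc (hT.mem_of_apply_ne_zero (by omega))
  · exact hy ▸ hT.apply_mem_Icc (hT.mem_of_apply_ne_zero (by omega))
  · rw [comp_apply, hT.2.1 z hz]
    exact Equiv.swap_apply_of_ne_of_ne (by omega) (by omega)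

end IsStandardYT

theorem exists_isStandardYT (L : YoungDiagram) : ∃ T, IsStandardYT L T := by
  induction h : L.cells.card generalizing L with
  | zero => exact ⟨0, by simp [IsStandardYT, Finset.card_eq_zero.1 h]⟩
  | succ n ih =>
    obtain ⟨c, hc⟩ := exists_isCorner (L := L) (Finset.card_pos.1 (by omega))
    obtain ⟨W, hW⟩ := ih (L.eraseCorner c hc) (by rw [card_eraseCorner, h, Nat.add_sub_cancel])
    exact ⟨_, hW.update_card⟩

section TwoCorners

variable {L : YoungDiagram} {c c' : ℕ × ℕ}

theorem exists_isCorner_between (hc : L.IsCorner c) (hc' : L.IsCorner c') (hrow : c.1 < c'.1)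
    (L₂ : YoungDiagram) (hL₂ : ∀ x, x ∈ L₂ ↔ x ≠ c' ∧ x ≠ c ∧ x ∈ L) :
    ∃ g, L₂.IsCorner g ∧ rltY c' g ∧ rltY g c := by
  have hcol : c'.2 < c.2 := hc.snd_lt_of_fst_lt hc'.1 hrow
  -- A cell of `S` maximising `x.1 + x.2` is a corner of `L₂`, since `S` is closed upwards in `L₂`.
  set S := L₂.cells.filter fun x => c.1 ≤ x.1 ∧ c'.2 ≤ x.2
  have hleft : (c.1, c.2 - 1) ∈ S := by
    refine Finset.mem_filter.2
      ⟨(hL₂ _).2 ⟨fun h => ?_, fun h => ?_, L.up_left_mem le_rfl (Nat.sub_le _ _) hc.1⟩,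
        le_rfl, by omega⟩
    · have := congrArg Prod.fst h
      dsimp only at this
      omega
    · have := congrArg Prod.snd h
      dsimp only at this
      omega
  obtain ⟨g, hgS, hmax⟩ := S.exists_max_image (fun x => x.1 + x.2) ⟨_, hleft⟩
  obtain ⟨hg, hg₁, hg₂⟩ := Finset.mem_filter.1 hgS
  obtain ⟨hgc', hgc, hgL⟩ := (hL₂ g).1 hg
  have hrow' : g.1 < c'.1 := by
    by_contra! h
    exact hgc' (hc'.eq_of_le hgL (Prod.le_def.2 ⟨h, hg₂⟩))
  have hcol' : g.2 < c.2 := by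
    by_contra! h
    exact hgc (hc.eq_of_le hgL (Prod.le_def.2 ⟨hg₁, h⟩))
  refine ⟨g, ⟨hg, fun h => ?_, fun h => ?_⟩, Or.inl ?_, Or.inl ?_⟩
  · have := hmax _ (Finset.mem_filter.2 ⟨h, by dsimp only; omega, hg₂⟩)
    dsimp only at this
    omega
  · have := hmax _ (Finset.mem_filter.2 ⟨h, hg₁, by dsimp only; omega⟩)
    dsimp only at this
    omega
  · unfold contentY
    omega
  · unfold contentY
    omega

theorem exists_isStandardYT_top_three (hc : L.IsCorner c) (hc' : L.IsCorner c')
    (hrow : c.1 < c'.1) :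
    ∃ V g, IsStandardYT L V ∧ V c = L.cells.card ∧ V c' = L.cells.card - 1 ∧
      V g = L.cells.card - 2 ∧ 2 < L.cells.card ∧ rltY c' g ∧ rltY g c := by
  have hne : c' ≠ c := by
    rintro rfl
    omega
  set L₁ := L.eraseCorner c hc
  set L₂ := L₁.eraseCorner c' (IsCorner.eraseCorner (hc := hc) hc' hne)
  obtain ⟨g, hg, hc'g, hgc⟩ := exists_isCorner_between hc hc' hrow L₂ fun x => by
    simp only [L₂, L₁, mem_eraseCorner]
  obtain ⟨hgc', hgc'', -⟩ : g ≠ c' ∧ g ≠ c ∧ g ∈ L := by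
    simpa only [L₂, L₁, mem_eraseCorner] using hg.1
  obtain ⟨W, hW⟩ := exists_isStandardYT (L₂.eraseCorner g hg)
  have h₁ : L₁.cells.card = L.cells.card - 1 := card_eraseCorner
  have h₂ : L₂.cells.card = L.cells.card - 2 := by
    rw [card_eraseCorner, h₁]
    omega
  have hpos : 0 < L₂.cells.card := Finset.card_pos.2 ⟨g, hg.1⟩
  refine ⟨update (update (update W g L₂.cells.card) c' L₁.cells.card) c L.cells.card, g,
    hW.update_card.update_card.update_card, update_self .., ?_, ?_, by omega, hc'g, hgc⟩
  · rw [update_of_ne hne, update_self, h₁]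
  · rw [update_of_ne hgc'', update_of_ne hgc', update_self, h₂]

theorem exists_dualEquivalent_pair (hc : L.IsCorner c) (hc' : L.IsCorner c')
    (hrow : c.1 < c'.1) :
    ∃ V V', IsStandardYT L V ∧ IsStandardYT L V' ∧ V c = L.cells.card ∧
      V' c' = L.cells.card ∧ DualEquivalent L.cells.card V V' ∧
      DualEquivalent L.cells.card V' V := by
  obtain ⟨V, g, hV, hVc, hVc', hVg, hN, hc'g, hgc⟩ := exists_isStandardYT_top_three hc hc' hrow
  obtain ⟨i, hi⟩ : ∃ i, L.cells.card = i + 1 := ⟨_, (Nat.sub_add_cancel (by omega)).symm⟩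
  rw [hi] at hVc hVc' hVg hN ⊢
  rw [Nat.add_sub_cancel] at hVc'
  rw [show i + 1 - 2 = i - 1 by omega] at hVg
  set V' := Equiv.swap i (i + 1) ∘ V
  have hV' : IsStandardYT L V' :=
    hV.swap_comp (by omega) hVc' hVc hrow.ne' (hc.snd_lt_of_fst_lt hc'.1 hrow).ne
  have hV'c : V' c = i := by simp [V', hVc]
  have hV'c' : V' c' = i + 1 := by simp [V', hVc']
  have hV'g : V' g = i - 1 := by
    simp only [V', comp_apply, hVg]
    exact Equiv.swap_apply_of_ne_of_ne (by omega) (by omega)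
  have hVV' : dY V i = V' := by
    refine dY_eq_swap_comp_of_between ?_
    rw [hV.cellOfY_eq hVg (by omega), hV.cellOfY_eq hVc' (by omega),
      hV.cellOfY_eq hVc (by omega)]
    exact Or.inl ⟨hc'g, hgc⟩
  have hV'V : dY V' i = V := by
    rw [dY_eq_swap_comp_of_between]
    · funext x
      exact Equiv.swap_apply_self _ _ _
    rw [hV'.cellOfY_eq hV'g (by omega), hV'.cellOfY_eq hV'c (by omega),
      hV'.cellOfY_eq hV'c' (by omega)]
    exact Or.inr ⟨hc'g, hgc⟩
  exact ⟨V, V', hV, hV', hVc, hV'c', hVV' ▸ .single (by omega) (by omega),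
    hV'V ▸ .single (by omega) (by omega)⟩

theorem exists_dualEquivalent_of_isCorner (hc : L.IsCorner c) (hc' : L.IsCorner c')
    (hne : c ≠ c') :
    ∃ V V', IsStandardYT L V ∧ IsStandardYT L V' ∧ V c = L.cells.card ∧
      V' c' = L.cells.card ∧ DualEquivalent L.cells.card V V' := by
  rcases Nat.lt_or_gt_of_ne (hc.fst_ne hc' hne) with h | h
  · obtain ⟨V, V', hV, hV', hVc, hV'c', hVV', -⟩ := exists_dualEquivalent_pair hc hc' h
    exact ⟨V, V', hV, hV', hVc, hV'c', hVV'⟩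
  · obtain ⟨V, V', hV, hV', hVc', hV'c, -, hV'V⟩ := exists_dualEquivalent_pair hc' hc h
    exact ⟨V', V, hV', hV, hV'c, hVc', hV'V⟩

end TwoCorners

theorem dualEquivalent_of_isStandardYT {L : YoungDiagram} {T U : ℕ × ℕ → ℕ}
    (hT : IsStandardYT L T) (hU : IsStandardYT L U) : DualEquivalent L.cells.card T U := by
  induction h : L.cells.card generalizing L T U with
  | zero =>
    have hL : L.cells = ∅ := Finset.card_eq_zero.1 h
    have hTU : T = U := funext fun x =>
      (hT.2.1 x (hL ▸ Finset.notMem_empty x)).trans (hU.2.1 x (hL ▸ Finset.notMem_empty x)).symm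
    exact hTU ▸ .refl T
  | succ n ih =>
    have hlift : ∀ c (hc : L.IsCorner c) {S S'}, IsStandardYT L S → IsStandardYT L S' →
        S c = n + 1 → S' c = n + 1 → DualEquivalent (n + 1) S S' := by
      intro c hc S S' hS hS' hSc hS'c
      refine .of_update_zero hSc hS'c (ih (hS.update_zero hc (h ▸ hSc))
        (hS'.update_zero hc (h ▸ hS'c)) ?_)
      rw [card_eraseCorner, h, Nat.add_sub_cancel]
    have htop : n + 1 ∈ Set.Icc 1 L.cells.card := by
      rw [h]
      exact ⟨by omega, le_rfl⟩
    obtain ⟨cT, hcT, hTc⟩ := hT.1.2.2 htop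
    obtain ⟨cU, hcU, hUc⟩ := hU.1.2.2 htop
    have hcT' := hT.isCorner hcT (hTc.trans h.symm)
    have hcU' := hU.isCorner hcU (hUc.trans h.symm)
    by_cases hTU : cT = cU
    · exact hlift cT hcT' hT hU hTc (hTU ▸ hUc)
    · obtain ⟨V, V', hV, hV', hVc, hV'c, hVV'⟩ := exists_dualEquivalent_of_isCorner hcT' hcU' hTU
      rw [h] at hVc hV'c hVV'
      exact (hlift cT hcT' hT hV hTc hVc).trans (hVV'.trans (hlift cU hcU' hV' hU hV'c hUc))

/-- two standard Young tableaux of partition shapes are dual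
equivalent (connected by a sequence of elementary dual equivalence moves
`d_i`, `1 < i < n`) if and only if they have the same shape. -/
theorem dual_equivalent_iff_same_shape (lam mu : YoungDiagram)
    (T U : ℕ × ℕ → ℕ) (hT : IsStandardYT lam T) (hU : IsStandardYT mu U) :
    (∃ l : List ℕ, (∀ i ∈ l, 1 < i ∧ i < lam.cells.card) ∧
        l.foldl (fun S i => dY S i) T = U) ↔ lam = mu := by
  constructor
  · rintro ⟨l, hl, rfl⟩
    refine YoungDiagram.ext (Finset.ext fun x => ?_)
    rw [← not_iff_not, ← hT.apply_eq_zero_iff, ← hU.apply_eq_zero_iff,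
      foldl_dY_apply_eq_iff fun i hi => Or.inl (hl i hi).1]
  · rintro rfl
    exact dualEquivalent_of_isStandardYT hT hU
end

section
/- For a k-tuple of skew shapes μ and a standard filling T of μ, the combined involution D_i preserves the number of diagonal inversions: dinv(D_i(T)) = dinv(T). -/
/-!  A `k`-tuple of skew shapes is modelled as `S : Fin k → Finset (ℕ × ℕ)`
with each `S j` the cell set of a skew diagram `λ/μ`; a cell of the tuple is
an element of `Fin k × ℕ × ℕ`, written `(j, r, c)` for row `r`, column `c` of
the `j`-th component.  A standard filling assigns `1,…,N` bijectively to the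
cells, increasing along rows and columns of each component. -/

/-- All cells of the tuple of shapes. -/
def tupleCells (k : ℕ) (S : Fin k → Finset (ℕ × ℕ)) : Finset (Fin k × ℕ × ℕ) :=
  Finset.univ.biUnion fun j => (S j).image fun c => (j, c)

/-- The shifted content `c̃(x) = k·c(x) + j` of a cell `x = (j, r, c)`, where
`c(x) = c - r` is the usual content. -/
def shiftedContent (k : ℕ) (x : Fin k × ℕ × ℕ) : ℤ :=
  (k : ℤ) * ((x.2.2 : ℤ) - (x.2.1 : ℤ)) + (x.1 : ℤ)

/-- The content reading order: increasing shifted content, and southwest to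
northeast (increasing column) along each diagonal. -/
def tupleRlt (k : ℕ) (x y : Fin k × ℕ × ℕ) : Prop :=
  shiftedContent k x < shiftedContent k y ∨
    (shiftedContent k x = shiftedContent k y ∧ x.2.2 < y.2.2)

instance (k : ℕ) (x y : Fin k × ℕ × ℕ) : Decidable (tupleRlt k x y) :=
  inferInstanceAs (Decidable (_ ∨ _ ∧ _))

/-- `S j` is a skew diagram (a set-difference of Young diagrams). -/
def IsSkewShape (s : Finset (ℕ × ℕ)) : Prop :=
  ∃ lam mu : YoungDiagram, mu ≤ lam ∧ s = lam.cells \ mu.cells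

/-- `T` is a standard filling of the tuple of shapes `S`. -/
def IsStandardTuple (k : ℕ) (S : Fin k → Finset (ℕ × ℕ))
    (T : Fin k × ℕ × ℕ → ℕ) : Prop :=
  Set.BijOn T ↑(tupleCells k S) (Set.Icc 1 (tupleCells k S).card) ∧
  (∀ x, x ∉ tupleCells k S → T x = 0) ∧
  (∀ (j : Fin k) (r c : ℕ), (r, c) ∈ S j → (r, c + 1) ∈ S j →
    T (j, r, c) < T (j, r, c + 1)) ∧
  (∀ (j : Fin k) (r c : ℕ), (r, c) ∈ S j → (r + 1, c) ∈ S j →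
    T (j, r, c) < T (j, r + 1, c))

/-- The cell of `T` containing the value `v` (via choice). -/
noncomputable def tupleCellOf (k : ℕ) [NeZero k] (T : Fin k × ℕ × ℕ → ℕ)
    (v : ℕ) : Fin k × ℕ × ℕ :=
  haveI : Nonempty (Fin k × ℕ × ℕ) :=
    ⟨(⟨0, Nat.pos_of_ne_zero (NeZero.ne k)⟩, 0, 0)⟩
  Classical.epsilon fun x => T x = v

/-- The combined involution `D_i` on standard fillings of a `k`-tuple of
shapes: it acts by the elementary dual equivalence move `d_i` when the maximal
pairwise shifted-content distance of the cells of `i-1, i, i+1` exceeds `k`,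
and by the twisted move `d̃_i` when that distance is at most `k`; both act on
the content reading word. -/
noncomputable def Dmove (k : ℕ) [NeZero k] (i : ℕ)
    (T : Fin k × ℕ × ℕ → ℕ) : Fin k × ℕ × ℕ → ℕ :=
  let a := i - 1
  let b := i
  let c := i + 1
  let xa := tupleCellOf k T a
  let xb := tupleCellOf k T b
  let xc := tupleCellOf k T c
  if (tupleRlt k xa xb ∧ tupleRlt k xb xc) ∨
      (tupleRlt k xc xb ∧ tupleRlt k xb xa) then T
  else if (k : ℤ) <
      max (max |shiftedContent k xa - shiftedContent k xb|
               |shiftedContent k xc - shiftedContent k xb|)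
          |shiftedContent k xa - shiftedContent k xc| then
    -- untwisted move: interchange `b` with the further of `a, c`
    let p := if tupleRlt k xb xa ∧ tupleRlt k xb xc then
               (if tupleRlt k xa xc then c else a)
             else (if tupleRlt k xa xc then a else c)
    fun x => if T x = b then p else if T x = p then b else T x
  else
    -- twisted move: cyclically rotate `a, b, c` so `b` crosses over
    let u := if tupleRlt k xa xc then a else c  -- outer value occurring first
    let v := if tupleRlt k xa xc then c else a  -- outer value occurring last
    if tupleRlt k xb xa ∧ tupleRlt k xb xc then
      fun x => if T x = b then u else if T x = u then v
               else if T x = v then b else T x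
    else
      fun x => if T x = u then b else if T x = v then u
               else if T x = b then v else T x

/-- The set of diagonal descents of `T`. -/
def dDesSet (k : ℕ) (S : Fin k → Finset (ℕ × ℕ)) (T : Fin k × ℕ × ℕ → ℕ) :
    Set ((Fin k × ℕ × ℕ) × (Fin k × ℕ × ℕ)) :=
  {p | p.1 ∈ tupleCells k S ∧ p.2 ∈ tupleCells k S ∧
    shiftedContent k p.2 - shiftedContent k p.1 = (k : ℤ) ∧ T p.2 < T p.1}

/-- The set of diagonal inversions of `T`. -/
def dInvSet (k : ℕ) (S : Fin k → Finset (ℕ × ℕ)) (T : Fin k × ℕ × ℕ → ℕ) :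
    Set ((Fin k × ℕ × ℕ) × (Fin k × ℕ × ℕ)) :=
  {p | p.1 ∈ tupleCells k S ∧ p.2 ∈ tupleCells k S ∧
    0 < shiftedContent k p.2 - shiftedContent k p.1 ∧
    shiftedContent k p.2 - shiftedContent k p.1 < (k : ℤ) ∧ T p.2 < T p.1}

/-!
Since two cells on a common diagonal of a skew shape carry entries at least `3` apart, the
entries `i - 1`, `i`, `i + 1` lie in cells with pairwise distinct shifted contents.
Interchanging two consecutive entries changes the set of diagonal inversions only at the pair
formed by their two cells: not at all if their shifted contents are at least `k` apart, and by
adding or removing that pair otherwise. The untwisted move is one such interchange between cells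
more than `k` apart. The twisted move is the product of two interchanges of `i` with its
neighbours along content-consecutive cells; as `i - 1` and `i + 1` lie on opposite sides of `i`,
one of them creates a diagonal inversion and the other destroys one.
-/

@[simp]
theorem mem_tupleCells {k : ℕ} {S : Fin k → Finset (ℕ × ℕ)} {j : Fin k} {r c : ℕ} :
    (j, r, c) ∈ tupleCells k S ↔ (r, c) ∈ S j := by
  simp [tupleCells]

theorem IsSkewShape.mem_of_le_of_le {s : Finset (ℕ × ℕ)} (hs : IsSkewShape s)
    {r₁ c₁ r₂ c₂ r c : ℕ} (h₁ : (r₁, c₁) ∈ s) (h₂ : (r₂, c₂) ∈ s)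
    (hr₁ : r₁ ≤ r) (hr₂ : r ≤ r₂) (hc₁ : c₁ ≤ c) (hc₂ : c ≤ c₂) : (r, c) ∈ s := by
  obtain ⟨lam, mu, -, rfl⟩ := hs
  simp only [Finset.mem_sdiff, YoungDiagram.mem_cells] at h₁ h₂ ⊢
  exact ⟨lam.up_left_mem hr₂ hc₂ h₂.1, fun h => h₁.2 (mu.up_left_mem hr₁ hc₁ h)⟩

section ShiftedContent

variable {k : ℕ}

theorem shiftedContent_emod (x : Fin k × ℕ × ℕ) : shiftedContent k x % k = x.1 := by
  have : ((x.1 : ℕ) : ℤ) < k := by exact_mod_cast x.1.isLt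
  rw [shiftedContent, Int.mul_add_emod_self_left, Int.emod_eq_of_lt (by positivity) this]

theorem shiftedContent_ediv (x : Fin k × ℕ × ℕ) :
    shiftedContent k x / k = (x.2.2 : ℤ) - x.2.1 := by
  have : ((x.1 : ℕ) : ℤ) < k := by exact_mod_cast x.1.isLt
  rw [shiftedContent, Int.mul_add_ediv_left _ _ (by omega),
    Int.ediv_eq_zero_of_lt (by positivity) this, add_zero]

theorem shiftedContent_eq_iff {x y : Fin k × ℕ × ℕ} :
    shiftedContent k x = shiftedContent k y ↔
      x.1 = y.1 ∧ (x.2.2 : ℤ) - x.2.1 = (y.2.2 : ℤ) - y.2.1 := by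
  refine ⟨fun h => ⟨?_, ?_⟩, fun ⟨h₁, h₂⟩ => by rw [shiftedContent, shiftedContent, h₁, h₂]⟩
  · have := congrArg (· % (k : ℤ)) h
    simp only [shiftedContent_emod] at this
    exact Fin.ext (by exact_mod_cast this)
  · rw [← shiftedContent_ediv, ← shiftedContent_ediv, h]

theorem tupleRlt_iff_of_ne {x y : Fin k × ℕ × ℕ}
    (h : shiftedContent k x ≠ shiftedContent k y) :
    tupleRlt k x y ↔ shiftedContent k x < shiftedContent k y := by
  simp [tupleRlt, h]

end ShiftedContent

namespace IsStandardTuple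

variable {k : ℕ} {S : Fin k → Finset (ℕ × ℕ)} {T : Fin k × ℕ × ℕ → ℕ}

theorem injOn (hT : IsStandardTuple k S T) : Set.InjOn T (tupleCells k S) :=
  hT.1.injOn

theorem mem_of_ne_zero (hT : IsStandardTuple k S T) {x : Fin k × ℕ × ℕ} (hx : T x ≠ 0) :
    x ∈ tupleCells k S := by
  by_contra h
  exact hx (hT.2.1 x h)

theorem apply_tupleCellOf [NeZero k] (hT : IsStandardTuple k S T) {v : ℕ} (h₁ : 1 ≤ v)
    (h₂ : v ≤ (tupleCells k S).card) : T (tupleCellOf k T v) = v := by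
  obtain ⟨x, -, hx⟩ := hT.1.surjOn (Set.mem_Icc.mpr ⟨h₁, h₂⟩)
  exact Classical.epsilon_spec (p := fun x => T x = v) ⟨x, hx⟩

theorem add_three_le_of_square (hT : IsStandardTuple k S T) {j : Fin k}
    (hS : IsSkewShape (S j)) {r c : ℕ} (h₁ : (r, c) ∈ S j) (h₂ : (r + 1, c + 1) ∈ S j) :
    T (j, r, c) + 3 ≤ T (j, r + 1, c + 1) := by
  have hE : (r, c + 1) ∈ S j := hS.mem_of_le_of_le h₁ h₂ le_rfl (by omega) (by omega) le_rfl
  have hS' : (r + 1, c) ∈ S j := hS.mem_of_le_of_le h₁ h₂ (by omega) le_rfl le_rfl (by omega)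
  have hne : T (j, r, c + 1) ≠ T (j, r + 1, c) := fun h => by
    have := hT.injOn (mem_tupleCells.mpr hE) (mem_tupleCells.mpr hS') h
    simp at this
  have := hT.2.2.1 j r c h₁ hE
  have := hT.2.2.1 j (r + 1) c hS' h₂
  have := hT.2.2.2 j r c h₁ hS'
  have := hT.2.2.2 j r (c + 1) hE h₂
  omega

theorem add_three_le_of_diag (hT : IsStandardTuple k S T) {j : Fin k}
    (hS : IsSkewShape (S j)) (d : ℕ) {r c : ℕ} (h₁ : (r, c) ∈ S j)
    (h₂ : (r + d + 1, c + d + 1) ∈ S j) :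
    T (j, r, c) + 3 ≤ T (j, r + d + 1, c + d + 1) := by
  induction d generalizing r c with
  | zero => exact hT.add_three_le_of_square hS h₁ h₂
  | succ d ih =>
    have hnext : (r + 1, c + 1) ∈ S j :=
      hS.mem_of_le_of_le h₁ h₂ (by omega) (by omega) (by omega) (by omega)
    have := hT.add_three_le_of_square hS h₁ hnext
    have := ih hnext (by convert h₂ using 2 <;> omega)
    rw [show r + 1 + d + 1 = r + (d + 1) + 1 by omega,
      show c + 1 + d + 1 = c + (d + 1) + 1 by omega] at this
    omega

theorem shiftedContent_ne (hT : IsStandardTuple k S T) (hS : ∀ j, IsSkewShape (S j))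
    {x y : Fin k × ℕ × ℕ} (hx : x ∈ tupleCells k S) (hy : y ∈ tupleCells k S)
    (hlt : T x < T y) (hle : T y ≤ T x + 2) : shiftedContent k x ≠ shiftedContent k y := by
  obtain ⟨j, rx, cx⟩ := x
  obtain ⟨j', ry, cy⟩ := y
  intro h
  obtain ⟨rfl, hcontent⟩ := shiftedContent_eq_iff.mp h
  rw [mem_tupleCells] at hx hy
  dsimp only at hcontent hlt hle
  rcases lt_trichotomy rx ry with hr | rfl | hr
  · obtain ⟨d, rfl⟩ := Nat.exists_eq_add_of_lt hr
    obtain rfl : cy = cx + d + 1 := by omega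
    have := hT.add_three_le_of_diag (hS j) d hx hy
    omega
  · obtain rfl : cy = cx := by omega
    omega
  · obtain ⟨d, rfl⟩ := Nat.exists_eq_add_of_lt hr
    obtain rfl : cx = cy + d + 1 := by omega
    have := hT.add_three_le_of_diag (hS j) d hy hx
    omega

end IsStandardTuple

theorem Nat.swap_apply_lt_swap_apply_iff {v w u u' : ℕ} (hvw : w = v + 1 ∨ v = w + 1)
    (h : ¬(u = v ∧ u' = w)) (h' : ¬(u = w ∧ u' = v)) :
    Equiv.swap v w u < Equiv.swap v w u' ↔ u < u' := by
  rw [Equiv.swap_apply_def, Equiv.swap_apply_def]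
  split_ifs <;> omega

section SwapAdjacentEntries

variable {k : ℕ} {S : Fin k → Finset (ℕ × ℕ)} {T : Fin k × ℕ × ℕ → ℕ}
  {x y : Fin k × ℕ × ℕ}

theorem dInvSet_finite : (dInvSet k S T).Finite :=
  (tupleCells k S ×ˢ tupleCells k S).finite_toSet.subset fun _ hp =>
    Finset.mem_coe.mpr (Finset.mem_product.mpr ⟨hp.1, hp.2.1⟩)

theorem mem_dInvSet_swap_comp_iff (hinj : Set.InjOn T (tupleCells k S))
    (hx : x ∈ tupleCells k S) (hy : y ∈ tupleCells k S) (hadj : T y = T x + 1 ∨ T x = T y + 1)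
    {p : (Fin k × ℕ × ℕ) × (Fin k × ℕ × ℕ)} (hp : p ≠ (x, y)) (hp' : p ≠ (y, x)) :
    p ∈ dInvSet k S (Equiv.swap (T x) (T y) ∘ T) ↔ p ∈ dInvSet k S T := by
  simp only [dInvSet, Set.mem_ofPred_eq, Function.comp_apply]
  refine and_congr_right fun h₁ => and_congr_right fun h₂ => and_congr_right fun _ =>
    and_congr_right fun _ => Nat.swap_apply_lt_swap_apply_iff hadj ?_ ?_
  · exact fun ⟨e₂, e₁⟩ => hp' (Prod.ext (hinj h₁ hy e₁) (hinj h₂ hx e₂))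
  · exact fun ⟨e₂, e₁⟩ => hp (Prod.ext (hinj h₁ hx e₁) (hinj h₂ hy e₂))

theorem dInvSet_swap_comp_of_le_abs (hinj : Set.InjOn T (tupleCells k S))
    (hx : x ∈ tupleCells k S) (hy : y ∈ tupleCells k S) (hadj : T y = T x + 1 ∨ T x = T y + 1)
    (hfar : (k : ℤ) ≤ |shiftedContent k y - shiftedContent k x|) :
    dInvSet k S (Equiv.swap (T x) (T y) ∘ T) = dInvSet k S T := by
  ext p
  by_cases hp : p = (x, y) ∨ p = (y, x)
  · have hout : ∀ T', p ∉ dInvSet k S T' := by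
      rintro T' ⟨-, -, h₁, h₂, -⟩
      rw [abs_eq_max_neg] at hfar
      rcases hp with rfl | rfl <;> dsimp only at h₁ h₂ <;> omega
    simp only [hout]
  · rw [not_or] at hp
    exact mem_dInvSet_swap_comp_iff hinj hx hy hadj hp.1 hp.2

theorem dInvSet_swap_comp_eq_insert (hinj : Set.InjOn T (tupleCells k S))
    (hx : x ∈ tupleCells k S) (hy : y ∈ tupleCells k S) (hxy : T y = T x + 1)
    (hpos : shiftedContent k x < shiftedContent k y)
    (hlt : shiftedContent k y - shiftedContent k x < k) :
    dInvSet k S (Equiv.swap (T x) (T y) ∘ T) = insert (x, y) (dInvSet k S T) := by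
  ext p
  by_cases hp : p = (x, y)
  · subst hp
    simp only [Set.mem_insert, iff_true, dInvSet, Set.mem_ofPred_eq, Function.comp_apply,
      Equiv.swap_apply_left, Equiv.swap_apply_right]
    exact ⟨hx, hy, by omega, hlt, by omega⟩
  by_cases hp' : p = (y, x)
  · subst hp'
    have hyx : (y, x) ≠ (x, y) := fun h => by
      obtain ⟨rfl, -⟩ := Prod.mk.inj h
      exact lt_irrefl _ hpos
    simp only [Set.mem_insert_iff, hyx, false_or, dInvSet, Set.mem_ofPred_eq]
    omega
  rw [Set.mem_insert_iff, or_iff_right hp]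
  exact mem_dInvSet_swap_comp_iff hinj hx hy (Or.inl hxy) hp hp'

theorem ncard_dInvSet_swap_comp_of_lt (hinj : Set.InjOn T (tupleCells k S))
    (hx : x ∈ tupleCells k S) (hy : y ∈ tupleCells k S) (hadj : T y = T x + 1 ∨ T x = T y + 1)
    (hpos : shiftedContent k x < shiftedContent k y)
    (hlt : shiftedContent k y - shiftedContent k x < k) :
    ((dInvSet k S (Equiv.swap (T x) (T y) ∘ T)).ncard : ℤ) =
      (dInvSet k S T).ncard + ((T y : ℤ) - T x) := by
  rcases hadj with hxy | hyx
  · rw [dInvSet_swap_comp_eq_insert hinj hx hy hxy hpos hlt,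
      Set.ncard_insert_of_notMem (fun h => by have : T y < T x := h.2.2.2.2; omega)
        dInvSet_finite]
    push_cast
    omega
  · set T' := Equiv.swap (T x) (T y) ∘ T
    have hT'x : T' x = T y := Equiv.swap_apply_left _ _
    have hT'y : T' y = T x := Equiv.swap_apply_right _ _
    have hback : Equiv.swap (T' x) (T' y) ∘ T' = T := by
      ext z
      simp [T', Equiv.swap_comm (T y)]
    have key := dInvSet_swap_comp_eq_insert (T := T') ((Equiv.injective _).comp_injOn hinj)
      hx hy (by omega) hpos hlt
    rw [hback] at key
    rw [key, Set.ncard_insert_of_notMem (fun h => by have : T' y < T' x := h.2.2.2.2; omega)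
      dInvSet_finite]
    push_cast
    omega

/-- The sign records whether the pair of the two cells becomes or stops being a diagonal
inversion. -/
theorem ncard_dInvSet_swap_comp (hinj : Set.InjOn T (tupleCells k S))
    (hx : x ∈ tupleCells k S) (hy : y ∈ tupleCells k S) (hadj : T y = T x + 1 ∨ T x = T y + 1)
    (hne : shiftedContent k x ≠ shiftedContent k y)
    (hlt : |shiftedContent k y - shiftedContent k x| < k) :
    ((dInvSet k S (Equiv.swap (T x) (T y) ∘ T)).ncard : ℤ) =
      (dInvSet k S T).ncard +
        (shiftedContent k y - shiftedContent k x).sign * ((T y : ℤ) - T x) := by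
  rw [abs_lt] at hlt
  rcases hne.lt_or_gt with h | h
  · rw [Int.sign_eq_one_of_pos (by omega), one_mul]
    exact ncard_dInvSet_swap_comp_of_lt hinj hx hy hadj h (by omega)
  · rw [Int.sign_eq_neg_one_of_neg (by omega), Equiv.swap_comm,
      ncard_dInvSet_swap_comp_of_lt hinj hy hx hadj.symm h (by omega)]
    ring

theorem ncard_dInvSet_swap_comp_swap_comp (hinj : Set.InjOn T (tupleCells k S))
    {b o₁ o₂ : Fin k × ℕ × ℕ} {i : ℕ} (hi : 0 < i) (hb : b ∈ tupleCells k S)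
    (ho₁ : o₁ ∈ tupleCells k S) (ho₂ : o₂ ∈ tupleCells k S) (hTb : T b = i)
    (hval : T o₁ = i - 1 ∧ T o₂ = i + 1 ∨ T o₁ = i + 1 ∧ T o₂ = i - 1)
    (hord : shiftedContent k b < shiftedContent k o₁ ∧ shiftedContent k o₁ < shiftedContent k o₂ ∨
      shiftedContent k o₂ < shiftedContent k o₁ ∧ shiftedContent k o₁ < shiftedContent k b)
    (hnear : |shiftedContent k o₂ - shiftedContent k b| ≤ k) :
    (dInvSet k S (Equiv.swap i (T o₂) ∘ Equiv.swap i (T o₁) ∘ T)).ncard =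
      (dInvSet k S T).ncard := by
  rw [abs_le] at hnear
  have h₁ := ncard_dInvSet_swap_comp hinj hb ho₁ (by omega) (by omega)
    (abs_lt.mpr ⟨by omega, by omega⟩)
  rw [hTb] at h₁
  set T₁ := Equiv.swap i (T o₁) ∘ T
  have hT₁o₁ : T₁ o₁ = i := Equiv.swap_apply_right _ _
  have hT₁o₂ : T₁ o₂ = T o₂ := Equiv.swap_apply_of_ne_of_ne (by omega) (by omega)
  have h₂ := ncard_dInvSet_swap_comp (T := T₁) ((Equiv.injective _).comp_injOn hinj) ho₁ ho₂
    (by omega) (by omega) (abs_lt.mpr ⟨by omega, by omega⟩)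
  rw [hT₁o₁, hT₁o₂, h₁] at h₂
  have hsign : (shiftedContent k o₂ - shiftedContent k o₁).sign =
      (shiftedContent k o₁ - shiftedContent k b).sign := by
    rcases hord with h | h
    · rw [Int.sign_eq_one_of_pos (by omega), Int.sign_eq_one_of_pos (by omega)]
    · rw [Int.sign_eq_neg_one_of_neg (by omega), Int.sign_eq_neg_one_of_neg (by omega)]
  have hsum : ((T o₁ : ℤ) - i) + ((T o₂ : ℤ) - i) = 0 := by omega
  zify
  rw [h₂, hsign]
  linear_combination (shiftedContent k o₁ - shiftedContent k b).sign * hsum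

end SwapAdjacentEntries

theorem Dmove_eq_swap_comp {k : ℕ} [NeZero k] {T : Fin k × ℕ × ℕ → ℕ} {i : ℕ} (hi : 0 < i)
    (hA : T (tupleCellOf k T (i - 1)) = i - 1) (hC : T (tupleCellOf k T (i + 1)) = i + 1)
    (hAB : shiftedContent k (tupleCellOf k T (i - 1)) ≠ shiftedContent k (tupleCellOf k T i))
    (hBC : shiftedContent k (tupleCellOf k T i) ≠ shiftedContent k (tupleCellOf k T (i + 1)))
    (hAC : shiftedContent k (tupleCellOf k T (i - 1)) ≠
      shiftedContent k (tupleCellOf k T (i + 1)))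
    (hmono : ¬((tupleRlt k (tupleCellOf k T (i - 1)) (tupleCellOf k T i) ∧
        tupleRlt k (tupleCellOf k T i) (tupleCellOf k T (i + 1))) ∨
      (tupleRlt k (tupleCellOf k T (i + 1)) (tupleCellOf k T i) ∧
        tupleRlt k (tupleCellOf k T i) (tupleCellOf k T (i - 1))))) :
    ∃ o₁ o₂, (T o₁ = i - 1 ∧ T o₂ = i + 1 ∨ T o₁ = i + 1 ∧ T o₂ = i - 1) ∧
      (shiftedContent k (tupleCellOf k T i) < shiftedContent k o₁ ∧
          shiftedContent k o₁ < shiftedContent k o₂ ∨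
        shiftedContent k o₂ < shiftedContent k o₁ ∧
          shiftedContent k o₁ < shiftedContent k (tupleCellOf k T i)) ∧
      Dmove k i T =
        if (k : ℤ) < |shiftedContent k o₂ - shiftedContent k (tupleCellOf k T i)| then
          Equiv.swap i (T o₂) ∘ T
        else Equiv.swap i (T o₂) ∘ Equiv.swap i (T o₁) ∘ T := by
  set A := tupleCellOf k T (i - 1) with hAdef
  set B := tupleCellOf k T i with hBdef
  set C := tupleCellOf k T (i + 1) with hCdef
  simp only [Dmove, ← hAdef, ← hBdef, ← hCdef, if_neg hmono]
  rw [tupleRlt_iff_of_ne hAB, tupleRlt_iff_of_ne hBC, tupleRlt_iff_of_ne hBC.symm,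
    tupleRlt_iff_of_ne hAB.symm] at hmono
  simp only [tupleRlt_iff_of_ne hAB.symm, tupleRlt_iff_of_ne hBC, tupleRlt_iff_of_ne hAC]
  have horder :
      (shiftedContent k B < shiftedContent k A ∧ shiftedContent k A < shiftedContent k C) ∨
      (shiftedContent k B < shiftedContent k C ∧ shiftedContent k C < shiftedContent k A) ∨
      (shiftedContent k A < shiftedContent k C ∧ shiftedContent k C < shiftedContent k B) ∨
      (shiftedContent k C < shiftedContent k A ∧ shiftedContent k A < shiftedContent k B) := by
    omega
  -- `(o₁, o₂)` is whichever of `(A, C)`, `(C, A)` makes the contents monotone; the distance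
  -- condition of `Dmove` then reads `k < |c̃ o₂ - c̃ B|`.
  rcases horder with h | h | h | h <;>
    first
      | refine ⟨A, C, by omega, by omega, ?_⟩
        rw [show max (max |shiftedContent k A - shiftedContent k B|
          |shiftedContent k C - shiftedContent k B|) |shiftedContent k A - shiftedContent k C| =
          |shiftedContent k C - shiftedContent k B| by simp only [abs_eq_max_neg]; omega]
      | refine ⟨C, A, by omega, by omega, ?_⟩
        rw [show max (max |shiftedContent k A - shiftedContent k B|
          |shiftedContent k C - shiftedContent k B|) |shiftedContent k A - shiftedContent k C| =
          |shiftedContent k A - shiftedContent k B| by simp only [abs_eq_max_neg]; omega]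
  all_goals
    rw [hA, hC]
    split_ifs <;> first
      | omega
      | (funext x; simp only [Function.comp_apply, Equiv.swap_apply_def] <;> split_ifs <;> omega)

/-- for a `k`-tuple of skew shapes `μ` and a standard filling
`T`, the combined involution `D_i` preserves the number of diagonal
inversions: `dinv(D_i(T)) = dinv(T)`. -/
theorem Dmove_dinv (k : ℕ) [NeZero k] (S : Fin k → Finset (ℕ × ℕ))
    (hS : ∀ j, IsSkewShape (S j)) (T : Fin k × ℕ × ℕ → ℕ)
    (hT : IsStandardTuple k S T) (i : ℕ) (hi : 1 < i)
    (hin : i < (tupleCells k S).card) :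
    (dInvSet k S (Dmove k i T)).ncard = (dInvSet k S T).ncard := by
  have hA := hT.apply_tupleCellOf (v := i - 1) (by omega) (by omega)
  have hB := hT.apply_tupleCellOf (v := i) (by omega) hin.le
  have hC := hT.apply_tupleCellOf (v := i + 1) (by omega) hin
  have hAmem := hT.mem_of_ne_zero (x := tupleCellOf k T (i - 1)) (by omega)
  have hBmem := hT.mem_of_ne_zero (x := tupleCellOf k T i) (by omega)
  have hCmem := hT.mem_of_ne_zero (x := tupleCellOf k T (i + 1)) (by omega)
  by_cases hmono : (tupleRlt k (tupleCellOf k T (i - 1)) (tupleCellOf k T i) ∧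
        tupleRlt k (tupleCellOf k T i) (tupleCellOf k T (i + 1))) ∨
      (tupleRlt k (tupleCellOf k T (i + 1)) (tupleCellOf k T i) ∧
        tupleRlt k (tupleCellOf k T i) (tupleCellOf k T (i - 1)))
  · simp only [Dmove, if_pos hmono]
  obtain ⟨o₁, o₂, hval, hord, hD⟩ := Dmove_eq_swap_comp (by omega) hA hC
    (hT.shiftedContent_ne hS hAmem hBmem (by omega) (by omega))
    (hT.shiftedContent_ne hS hBmem hCmem (by omega) (by omega))
    (hT.shiftedContent_ne hS hAmem hCmem (by omega) (by omega)) hmono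
  have ho₁ := hT.mem_of_ne_zero (x := o₁) (by omega)
  have ho₂ := hT.mem_of_ne_zero (x := o₂) (by omega)
  rw [hD]
  split_ifs with hfar
  · rw [← hB, dInvSet_swap_comp_of_le_abs hT.injOn hBmem ho₂ (by omega) hfar.le]
  · exact ncard_dInvSet_swap_comp_swap_comp hT.injOn (by omega) hBmem ho₁ ho₂ hB hval hord
      (not_lt.mp hfar)
end
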